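/- Let r ≥ 2 and let x_1 ≤ x_2 ≤ ... ≤ x_r be positive integers. Then f_r(x_1, x_2, ..., x_r) = (Σ_{1 ≤ i < j ≤ r} x_i x_j) − x_1 x_2. -/

import Mathlib

open SimpleGraph Finset

/-- `F` has a (not necessarily induced) copy in `G`:  there is an injective map of the
vertices of `F` into the vertices of `G` preserving adjacency. -/
def HasCopy {α β : Type*} (G : SimpleGraph α) (F : SimpleGraph β) : Prop :=
  ∃ f : β → α, Function.Injective f ∧ ∀ ⦃a b⦄, F.Adj a b → G.Adj (f a) (f b)

/-- `exNum G F` is the maximum number of edges of a spanning subgraph of `G`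
containing no copy of `F`. -/
noncomputable def exNum {α β : Type*} [Fintype α] (G : SimpleGraph α) (F : SimpleGraph β) : ℕ :=
  sSup {m | ∃ H : SimpleGraph α, H ≤ G ∧ ¬ HasCopy H F ∧ m = H.edgeSet.ncard}

/-- `kCliques k t` is the disjoint union of `k` copies of the complete graph `K_t`. -/
def kCliques (k t : ℕ) : SimpleGraph (Fin k × Fin t) :=
  SimpleGraph.fromRel (fun p q => p.1 = q.1)

/-- The complete multipartite graph with parts of sizes `n 0, …, n (r-1)`. -/
abbrev completeMultipartite {r : ℕ} (n : Fin r → ℕ) : SimpleGraph (Σ i : Fin r, Fin (n i)) :=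
  completeMultipartiteGraph (fun i => Fin (n i))

/-- The sum of `x` over the part of the (labelled) partition `g` with label `i`. -/
def partSum {r s : ℕ} (x : Fin r → ℕ) (g : Fin r → Fin s) (i : Fin s) : ℕ :=
  ∑ a ∈ Finset.univ.filter (fun a => g a = i), x a

/-- The sum, over unordered pairs of distinct parts of the (labelled) partition `g`,
of the products of the part sums of `x`. -/
def pairProdSum {r s : ℕ} (x : Fin r → ℕ) (g : Fin r → Fin s) : ℕ :=
  ∑ p ∈ Finset.univ.filter (fun p : Fin s × Fin s => p.1 < p.2),
    partSum x g p.1 * partSum x g p.2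

/-- The function `f_t` : the maximum, over all partitions of `{0, …, r-1}` into `t-1`
nonempty parts (encoded as surjections onto `Fin (t-1)`), of the sum over unordered pairs
of distinct parts of the products of the part sums. -/
def fT {r : ℕ} (t : ℕ) (x : Fin r → ℕ) : ℕ :=
  (Finset.univ.filter (fun g : Fin r → Fin (t - 1) => Function.Surjective g)).sup
    (fun g => pairProdSum x g)

/-!
Writing `S` for the sum of `x i * x j` over all pairs `i < j`, the value of a partition is `S`
minus the sum over the pairs lying in a common part. A map of `r` indices onto `r - 1` parts puts
some pair `a < b` into one part, and by monotonicity `x a * x b ≥ x 0 * x 1`. Conversely the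
partition whose only non-singleton part is `{0, 1}` loses exactly `x 0 * x 1`.
-/

section

variable {r s : ℕ} (x : Fin r → ℕ) (g : Fin r → Fin s)

def pairSum : ℕ :=
  ∑ p ∈ univ.filter (fun p : Fin r × Fin r => p.1 < p.2), x p.1 * x p.2

def samePartPairSum : ℕ :=
  ∑ p ∈ univ.filter (fun p : Fin r × Fin r => p.1 < p.2 ∧ g p.1 = g p.2), x p.1 * x p.2

theorem pairProdSum_eq_sum_part_lt :
    pairProdSum x g =
      ∑ p ∈ univ.filter (fun p : Fin r × Fin r => g p.1 < g p.2), x p.1 * x p.2 := by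
  rw [← sum_fiberwise_of_maps_to (g := fun p : Fin r × Fin r => (g p.1, g p.2))
    (t := univ.filter (fun q : Fin s × Fin s => q.1 < q.2)) (fun p hp => by simpa using hp)]
  refine sum_congr rfl fun q hq => ?_
  rw [partSum, partSum, sum_mul_sum, ← sum_product', ← filter_product]
  refine sum_congr ?_ fun _ _ => rfl
  ext p
  simp only [mem_filter, mem_product, mem_univ, true_and, Prod.ext_iff] at hq ⊢
  constructor
  · rintro ⟨h1, h2⟩
    exact ⟨h1 ▸ h2 ▸ hq, h1, h2⟩
  · exact And.right

/-- Each pair in different parts is counted once, ordered by its parts instead of its indices. -/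
theorem pairProdSum_eq_sum_lt_part_ne :
    pairProdSum x g =
      ∑ p ∈ univ.filter (fun p : Fin r × Fin r => p.1 < p.2 ∧ g p.1 ≠ g p.2), x p.1 * x p.2 := by
  rw [pairProdSum_eq_sum_part_lt]
  refine sum_nbij' (fun p => if p.1 < p.2 then p else p.swap)
    (fun p => if g p.1 < g p.2 then p else p.swap) ?_ ?_ ?_ ?_ ?_
  · intro p hp
    simp only [mem_filter, mem_univ, true_and] at hp ⊢
    have hne : p.1 ≠ p.2 := fun e => (e ▸ hp).false
    rcases hne.lt_or_gt with h | h
    · simp [h, hp.ne]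
    · simp [h.not_gt, h, hp.ne']
  · intro p hp
    simp only [mem_filter, mem_univ, true_and] at hp ⊢
    rcases hp.2.lt_or_gt with h | h
    · simp [h]
    · simp [h.not_gt, h]
  · intro p hp
    simp only [mem_filter, mem_univ, true_and] at hp
    have hne : p.1 ≠ p.2 := fun e => (e ▸ hp).false
    rcases hne.lt_or_gt with h | h
    · simp [h, hp]
    · simp [h.not_gt, hp.not_gt]
  · intro p hp
    simp only [mem_filter, mem_univ, true_and] at hp
    rcases hp.2.lt_or_gt with h | h
    · simp [h, hp.1]
    · simp [h.not_gt, hp.1.not_gt]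
  · intro p _
    split <;> simp [Nat.mul_comm]

theorem pairProdSum_eq_pairSum_sub : pairProdSum x g = pairSum x - samePartPairSum x g := by
  have hsplit := sum_filter_add_sum_filter_not
    (univ.filter (fun p : Fin r × Fin r => p.1 < p.2)) (fun p => g p.1 = g p.2)
    (fun p => x p.1 * x p.2)
  rw [filter_filter, filter_filter] at hsplit
  rw [pairProdSum_eq_sum_lt_part_ne, pairSum, samePartPairSum]
  simp only [ne_eq]
  omega

variable {x g}

theorem mul_le_samePartPairSum (hx : Monotone x) (hr : 2 ≤ r) (hs : s < r) :
    x ⟨0, zero_lt_two.trans_le hr⟩ * x ⟨1, one_lt_two.trans_le hr⟩ ≤ samePartPairSum x g := by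
  obtain ⟨a, b, hab, hg⟩ := Fintype.exists_ne_map_eq_of_card_lt g (by simpa using hs)
  wlog hlt : a < b generalizing a b
  · exact this b a hab.symm hg.symm (hab.symm.lt_of_le (not_lt.mp hlt))
  have hmem : (a, b) ∈ univ.filter (fun p : Fin r × Fin r => p.1 < p.2 ∧ g p.1 = g p.2) := by
    simp [hlt, hg]
  calc x ⟨0, zero_lt_two.trans_le hr⟩ * x ⟨1, one_lt_two.trans_le hr⟩ ≤ x a * x b :=
        Nat.mul_le_mul (hx (Fin.le_def.mpr (Nat.zero_le _))) (hx (Fin.le_def.mpr (by simp; omega)))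
    _ ≤ samePartPairSum x g :=
        single_le_sum (f := fun p : Fin r × Fin r => x p.1 * x p.2) (fun _ _ => Nat.zero_le _) hmem

def mergeZeroOne (hr : 2 ≤ r) : Fin r → Fin (r - 1) :=
  fun i => ⟨i.val - 1, by omega⟩

theorem mergeZeroOne_surjective (hr : 2 ≤ r) : Function.Surjective (mergeZeroOne hr) :=
  fun j => ⟨⟨j.val + 1, by omega⟩, by simp [mergeZeroOne]⟩

theorem samePartPairSum_mergeZeroOne (x : Fin r → ℕ) (hr : 2 ≤ r) :
    samePartPairSum x (mergeZeroOne hr) =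
      x ⟨0, zero_lt_two.trans_le hr⟩ * x ⟨1, one_lt_two.trans_le hr⟩ := by
  have hpairs : univ.filter
      (fun p : Fin r × Fin r => p.1 < p.2 ∧ mergeZeroOne hr p.1 = mergeZeroOne hr p.2) =
        {(⟨0, zero_lt_two.trans_le hr⟩, ⟨1, one_lt_two.trans_le hr⟩)} := by
    ext p
    simp only [mem_filter, mem_univ, true_and, mem_singleton, mergeZeroOne, Fin.ext_iff,
      Prod.ext_iff, Fin.lt_def]
    omega
  rw [samePartPairSum, hpairs, sum_singleton]

end

/-- For `r ≥ 2` and `x_1 ≤ x_2 ≤ ⋯ ≤ x_r` positive,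
`f_r(x_1,…,x_r) = (Σ_{i<j} x_i x_j) − x_1 x_2`. -/
theorem stmt_9 (r : ℕ) (hr : 2 ≤ r) (x : Fin r → ℕ)
    (hmono : Monotone x) :
    fT r x =
      (∑ p ∈ Finset.univ.filter (fun p : Fin r × Fin r => p.1 < p.2), x p.1 * x p.2)
        - x ⟨0, by omega⟩ * x ⟨1, by omega⟩ := by
  change fT r x = pairSum x - _
  apply le_antisymm
  · refine Finset.sup_le fun g _ => ?_
    rw [pairProdSum_eq_pairSum_sub]
    exact Nat.sub_le_sub_left (mul_le_samePartPairSum hmono hr (by omega)) _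
  · calc _ = pairProdSum x (mergeZeroOne hr) := by
          rw [pairProdSum_eq_pairSum_sub, samePartPairSum_mergeZeroOne]
      _ ≤ fT r x := Finset.le_sup (by simpa using mergeZeroOne_surjective hr)
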